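/- For any decorated slice s and i, j, merge(merge_{i,j}(s)) = merge(s), where merge recursively merges all maximal blocks of adjacent nodes decorated all by 0 or all by *, and merge_{i,j}(s) merges at most j consecutive mergible nodes starting from the i-th mergible pair. -/
import Mathlib


/-- Decorations of slice nodes. -/
inductive Dec | zero | star | one
deriving DecidableEq

/-- A decorated slice: a sequence of sets of states with decorations. -/
abbrev DSlice (Q : Type*) := List (Set Q × Dec)

/-- Two adjacent decorations are mergible iff equal and in `{0, *}`. -/
def mergibleB (d e : Dec) : Bool :=
  decide (d = e) && (decide (d = Dec.zero) || decide (d = Dec.star))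

/-- `merge`: recursively merge all adjacent mergible nodes. -/
def dmerge {Q : Type*} : DSlice Q → DSlice Q
  | [] => []
  | [x] => [x]
  | x :: y :: rest =>
    if mergibleB x.2 y.2 then dmerge ((x.1 ∪ y.1, x.2) :: rest)
    else x :: dmerge (y :: rest)
termination_by s => s.length

/-- Merge as many as possible but at most `j` merging operations at the front
(so at most `j + 1` consecutive nodes get merged into one). -/
def mergeFront {Q : Type*} : ℕ → DSlice Q → DSlice Q
  | 0, s => s
  | _ + 1, [] => []
  | _ + 1, [x] => [x]
  | j + 1, x :: y :: rest =>
    if mergibleB x.2 y.2 then mergeFront j ((x.1 ∪ y.1, x.2) :: rest) else x :: y :: rest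

/-- The positions of the mergible pairs of adjacent nodes, left to right. -/
def mergiblePos {Q : Type*} (s : DSlice Q) : List ℕ :=
  (List.range s.length).filter fun k =>
    match s[k]?, s[k + 1]? with
    | some x, some y => mergibleB x.2 y.2
    | _, _ => false

/-- `merge_{i,j}`: merge as many as possible and at most `j` consecutive
mergible nodes, starting from the `i`-th (1-indexed) mergible pair. -/
def mergeIJ {Q : Type*} (i j : ℕ) (s : DSlice Q) : DSlice Q :=
  match (mergiblePos s)[i - 1]? with
  | none => s
  | some k => s.take k ++ mergeFront (j - 1) (s.drop k)

lemma dmerge_step {Q : Type*} (t : DSlice Q) (x y : Set Q × Dec) (rest : DSlice Q)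
    (h : mergibleB x.2 y.2) :
    dmerge (t ++ x :: y :: rest) = dmerge (t ++ (x.1 ∪ y.1, x.2) :: rest) := by
  match t with
  | [] => simp only [List.nil_append]; rw [dmerge, if_pos h]
  | [a] =>
    by_cases hax : mergibleB a.2 x.2
    · have hay : mergibleB a.2 y.2 := by
        have h1 : a.2 = x.2 := by
          simpa [mergibleB] using (Bool.and_elim_left hax)
        rw [h1]; exact h
      simp only [List.cons_append, List.nil_append]
      rw [dmerge, if_pos hax, dmerge, if_pos hay, dmerge, if_pos hax,
        Set.union_assoc]
    · simp only [List.cons_append, List.nil_append]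
      rw [dmerge, if_neg hax, dmerge, if_pos h]
      conv_rhs => rw [dmerge]
      rw [if_neg hax]
  | a :: b :: t' =>
    by_cases hab : mergibleB a.2 b.2
    · simp only [List.cons_append]
      rw [dmerge, if_pos hab]
      conv_rhs => rw [dmerge]
      rw [if_pos hab, ← List.cons_append, ← List.cons_append]
      exact dmerge_step ((a.1 ∪ b.1, a.2) :: t') x y rest h
    · simp only [List.cons_append]
      rw [dmerge, if_neg hab]
      conv_rhs => rw [dmerge]
      rw [if_neg hab, ← List.cons_append, ← List.cons_append,
        dmerge_step (b :: t') x y rest h]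
termination_by t.length

lemma dmerge_mergeFront {Q : Type*} (j : ℕ) (t u : DSlice Q) :
    dmerge (t ++ mergeFront j u) = dmerge (t ++ u) := by
  induction j generalizing u with
  | zero => rfl
  | succ j ih =>
    match u with
    | [] => rfl
    | [x] => rfl
    | x :: y :: rest =>
      by_cases h : mergibleB x.2 y.2
      · rw [mergeFront, if_pos h, ih, dmerge_step t x y rest h]
      · rw [mergeFront, if_neg h]

/-- `merge (merge_{i,j} s) = merge s` for every decorated slice `s` and all `i, j`. -/
theorem stmt11 {Q : Type*} (s : DSlice Q) (i j : ℕ) :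
    dmerge (mergeIJ i j s) = dmerge s := by
  unfold mergeIJ
  cases h : (mergiblePos s)[i - 1]? with
  | none => rfl
  | some k =>
    simp only
    rw [dmerge_mergeFront, List.take_append_drop]
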